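/- arXiv:2502.21013 — 6 statements merged into one kernel-verified Lean document; each statement's English description precedes it below -/
import Mathlib

section
/- Let V be a real Hilbert space, let N ≥ 1 be a natural number and τ > 0 a real number. Let B : V →L[ℝ] V be a continuous linear operator that is symmetric (⟪B u, v⟫ = ⟪u, B v⟫ for all u, v) and nonnegative (⟪B u, u⟫ ≥ 0 for all u). Let K : V → V be strongly monotone with constant γ > 0 (⟪K u − K v, u − v⟫ ≥ γ‖u − v‖² for all u, v) and Lipschitz continuous with constant L ≥ 0 (‖K u − K v‖ ≤ L‖u − v‖ for all u, v). Then for every f : ZMod N → V there exists a unique u : ZMod N → V such that for every n : ZMod N one has (1/τ) • B (u n − u (n − 1)) + K (u n) = f n. -/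
open RealInnerProductSpace

/-!
Collect the whole periodic sequence into one unknown `u ∈ ℓ²(ZMod N; V)`; the scheme becomes a
single equation `A u = f`. The implicit Euler part of `A` is monotone because, summed over a full
period, `⟪B (uⁿ - uⁿ⁻¹), uⁿ⟫ ≥ ½ (⟪B uⁿ, uⁿ⟫ - ⟪B uⁿ⁻¹, uⁿ⁻¹⟫)` telescopes to zero, so `A`
inherits the strong monotonicity of `K`; it is clearly Lipschitz. Zarantonello's argument then
makes `u ↦ u - ρ (A u - f)` a contraction for small `ρ > 0`, and Banach's fixed point theorem
gives the solution; uniqueness is immediate from strong monotonicity.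
-/

section StronglyMonotone

variable {E : Type*} [NormedAddCommGroup E] [InnerProductSpace ℝ E] {A : E → E} {γ M : ℝ}

theorem injective_of_strongly_monotone (hγ : 0 < γ)
    (hmono : ∀ u v, γ * ‖u - v‖ ^ 2 ≤ ⟪A u - A v, u - v⟫) : Function.Injective A := by
  intro u v huv
  have h := hmono u v
  rw [huv, sub_self, inner_zero_left] at h
  have : ‖u - v‖ ^ 2 ≤ 0 := nonpos_of_mul_nonpos_right h hγ
  simpa [sub_eq_zero] using this

theorem norm_sub_smul_sub_sq_le {ρ : ℝ} (hρ : 0 ≤ ρ)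
    (hmono : ∀ u v, γ * ‖u - v‖ ^ 2 ≤ ⟪A u - A v, u - v⟫)
    (hlip : ∀ u v, ‖A u - A v‖ ≤ M * ‖u - v‖) (u v : E) :
    ‖(u - v) - ρ • (A u - A v)‖ ^ 2 ≤ (1 - 2 * ρ * γ + ρ ^ 2 * M ^ 2) * ‖u - v‖ ^ 2 := by
  have hA : ‖A u - A v‖ ^ 2 ≤ M ^ 2 * ‖u - v‖ ^ 2 := by
    rw [← mul_pow]; exact pow_le_pow_left₀ (norm_nonneg _) (hlip u v) 2
  rw [norm_sub_sq_real, real_inner_smul_right, real_inner_comm, norm_smul, mul_pow,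
    Real.norm_eq_abs, sq_abs]
  nlinarith [mul_le_mul_of_nonneg_left (hmono u v) hρ,
    mul_le_mul_of_nonneg_left hA (sq_nonneg ρ)]

theorem surjective_of_strongly_monotone_of_lipschitz [CompleteSpace E] (hγ : 0 < γ)
    (hM : 0 ≤ M) (hmono : ∀ u v, γ * ‖u - v‖ ^ 2 ≤ ⟪A u - A v, u - v⟫)
    (hlip : ∀ u v, ‖A u - A v‖ ≤ M * ‖u - v‖) : Function.Surjective A := by
  intro f
  -- `ρ = γ / (γ² + M²)` gives the contraction constant `M / √(γ² + M²)`, with no need for `γ ≤ M`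
  set S := γ ^ 2 + M ^ 2
  have hS : 0 < S := by positivity
  set ρ := γ / S
  set T : E → E := fun u => u - ρ • (A u - f)
  set k : NNReal := ⟨M / √S, by positivity⟩
  have hk : k < 1 := by
    rw [← NNReal.coe_lt_coe, NNReal.coe_one]
    show M / √S < 1
    rw [div_lt_one (by positivity)]
    exact Real.lt_sqrt hM |>.mpr (by simp only [S]; nlinarith)
  have hT : ContractingWith k T := by
    refine ⟨hk, LipschitzWith.of_dist_le_mul fun u v => ?_⟩
    have hTuv : T u - T v = (u - v) - ρ • (A u - A v) := by
      simp only [T, smul_sub]; abel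
    rw [dist_eq_norm, dist_eq_norm, hTuv, ← sq_le_sq₀ (norm_nonneg _) (by positivity)]
    refine (norm_sub_smul_sub_sq_le (by positivity) hmono hlip u v).trans ?_
    show _ ≤ (M / √S * ‖u - v‖) ^ 2
    rw [mul_pow, div_pow M, Real.sq_sqrt hS.le]
    refine mul_le_mul_of_nonneg_right ?_ (sq_nonneg _)
    rw [← sub_nonneg]
    have : M ^ 2 / S - (1 - 2 * ρ * γ + ρ ^ 2 * M ^ 2) = γ ^ 4 / S ^ 2 := by
      simp only [ρ, S]; field_simp; ring
    rw [this]; positivity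
  refine ⟨ContractingWith.fixedPoint T hT, ?_⟩
  have hfix := ContractingWith.fixedPoint_isFixedPt hT
  have : ρ • (A (ContractingWith.fixedPoint T hT) - f) = 0 := sub_eq_self.mp hfix
  rwa [smul_eq_zero_iff_right (by positivity), sub_eq_zero] at this

end StronglyMonotone

theorem PiLp.norm_le_mul_of_forall_norm_apply_le {ι : Type*} [Fintype ι] {β β' : ι → Type*}
    [∀ i, SeminormedAddCommGroup (β i)] [∀ i, SeminormedAddCommGroup (β' i)]
    {x : PiLp 2 β} {y : PiLp 2 β'} {c : ℝ} (hc : 0 ≤ c) (h : ∀ i, ‖x i‖ ≤ c * ‖y i‖) :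
    ‖x‖ ≤ c * ‖y‖ := by
  rw [← sq_le_sq₀ (norm_nonneg _) (by positivity), mul_pow, PiLp.norm_sq_eq_of_L2,
    PiLp.norm_sq_eq_of_L2, Finset.mul_sum]
  gcongr with i
  rw [← mul_pow]
  exact pow_le_pow_left₀ (norm_nonneg _) (h i) 2

theorem PiLp.norm_toLp_comp_perm {ι V : Type*} [Fintype ι] [SeminormedAddCommGroup V]
    (σ : Equiv.Perm ι) (x : PiLp 2 fun _ : ι => V) :
    ‖WithLp.toLp 2 fun i => x (σ i)‖ = ‖x‖ := by
  rw [← sq_eq_sq₀ (norm_nonneg _) (norm_nonneg _), PiLp.norm_sq_eq_of_L2,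
    PiLp.norm_sq_eq_of_L2]
  exact Equiv.sum_comp σ fun i => ‖x i‖ ^ 2

section Positive

variable {V : Type*} [NormedAddCommGroup V] [InnerProductSpace ℝ V] {B : V →L[ℝ] V}

theorem ContinuousLinearMap.IsPositive.two_mul_inner_le (hB : B.IsPositive) (a b : V) :
    2 * ⟪B a, b⟫ ≤ ⟪B a, a⟫ + ⟪B b, b⟫ := by
  have h := hB.inner_nonneg_left (a - b)
  have hba : ⟪B b, a⟫ = ⟪B a, b⟫ := by
    rw [hB.inner_left_eq_inner_right, real_inner_comm]
  simp only [map_sub, inner_sub_left, inner_sub_right, hba] at h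
  linarith

theorem ContinuousLinearMap.IsPositive.sum_inner_sub_perm_nonneg {ι : Type*} [Fintype ι]
    (hB : B.IsPositive) (σ : Equiv.Perm ι) (w : ι → V) :
    0 ≤ ∑ i, ⟪B (w i - w (σ i)), w i⟫ := by
  have hperm : ∑ i, ⟪B (w (σ i)), w (σ i)⟫ = ∑ i, ⟪B (w i), w i⟫ :=
    Equiv.sum_comp σ fun i => ⟪B (w i), w i⟫
  have hcross : 2 * ∑ i, ⟪B (w (σ i)), w i⟫
      ≤ ∑ i, ⟪B (w (σ i)), w (σ i)⟫ + ∑ i, ⟪B (w i), w i⟫ := by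
    rw [Finset.mul_sum, ← Finset.sum_add_distrib]
    exact Finset.sum_le_sum fun i _ => hB.two_mul_inner_le _ _
  simp only [map_sub, inner_sub_left, Finset.sum_sub_distrib]
  linarith

end Positive

section PeriodicEuler

variable {V : Type*} [NormedAddCommGroup V] [InnerProductSpace ℝ V] {N : ℕ}

noncomputable def periodicEulerOp (τ : ℝ) (B : V →L[ℝ] V) (K : V → V)
    (u : PiLp 2 fun _ : ZMod N => V) : PiLp 2 fun _ : ZMod N => V :=
  WithLp.toLp 2 fun n => (1 / τ) • B (u n - u (n - 1)) + K (u n)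

variable {τ : ℝ} {B : V →L[ℝ] V} {K : V → V}

theorem periodicEulerOp_sub_apply (u v : PiLp 2 fun _ : ZMod N => V) (n : ZMod N) :
    (periodicEulerOp τ B K u - periodicEulerOp τ B K v) n
      = (1 / τ) • B ((u - v) n - (u - v) (n - 1)) + (K (u n) - K (v n)) := by
  simp only [periodicEulerOp, PiLp.sub_apply, map_sub, smul_sub]
  abel

variable [NeZero N]

theorem periodicEulerOp_strongly_monotone (hτ : 0 ≤ τ) (hB : B.IsPositive) {γ : ℝ}
    (hK : ∀ u v, γ * ‖u - v‖ ^ 2 ≤ ⟪K u - K v, u - v⟫) (u v : PiLp 2 fun _ : ZMod N => V) :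
    γ * ‖u - v‖ ^ 2
      ≤ ⟪periodicEulerOp τ B K u - periodicEulerOp τ B K v, u - v⟫ := by
  have hdiff : 0 ≤ ∑ n, ⟪B ((u - v) n - (u - v) (n - 1)), (u - v) n⟫ :=
    hB.sum_inner_sub_perm_nonneg (Equiv.subRight 1) _
  have hKsum : γ * ‖u - v‖ ^ 2 ≤ ∑ n, ⟪K (u n) - K (v n), u n - v n⟫ := by
    rw [PiLp.norm_sq_eq_of_L2, Finset.mul_sum]
    exact Finset.sum_le_sum fun n _ => hK (u n) (v n)
  have hsplit : ⟪periodicEulerOp τ B K u - periodicEulerOp τ B K v, u - v⟫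
      = 1 / τ * ∑ n, ⟪B ((u - v) n - (u - v) (n - 1)), (u - v) n⟫
        + ∑ n, ⟪K (u n) - K (v n), u n - v n⟫ := by
    rw [PiLp.inner_apply, Finset.mul_sum, ← Finset.sum_add_distrib]
    refine Finset.sum_congr rfl fun n _ => ?_
    rw [periodicEulerOp_sub_apply, inner_add_left, real_inner_smul_left]
    rfl
  rw [hsplit]
  linarith [mul_nonneg (one_div_nonneg.mpr hτ) hdiff]

theorem periodicEulerOp_lipschitz {L : ℝ} (hL : 0 ≤ L) (hK : ∀ u v, ‖K u - K v‖ ≤ L * ‖u - v‖)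
    (u v : PiLp 2 fun _ : ZMod N => V) :
    ‖periodicEulerOp τ B K u - periodicEulerOp τ B K v‖ ≤ (2 * ‖B‖ / |τ| + L) * ‖u - v‖ := by
  set w := u - v
  let Sw : PiLp 2 fun _ : ZMod N => V := WithLp.toLp 2 fun n => w (Equiv.subRight 1 n)
  let X : PiLp 2 fun _ : ZMod N => V := WithLp.toLp 2 fun n => B ((w - Sw) n)
  let Z : PiLp 2 fun _ : ZMod N => V := WithLp.toLp 2 fun n => K (u n) - K (v n)
  have hsplit : periodicEulerOp τ B K u - periodicEulerOp τ B K v = (1 / τ) • X + Z := by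
    ext n
    rw [periodicEulerOp_sub_apply]
    rfl
  have hX : ‖X‖ ≤ 2 * ‖B‖ * ‖w‖ := calc
    ‖X‖ ≤ ‖B‖ * ‖w - Sw‖ := PiLp.norm_le_mul_of_forall_norm_apply_le (norm_nonneg _)
      fun n => B.le_opNorm _
    _ ≤ ‖B‖ * (‖w‖ + ‖Sw‖) := by gcongr; exact norm_sub_le _ _
    _ = 2 * ‖B‖ * ‖w‖ := by rw [PiLp.norm_toLp_comp_perm]; ring
  have hZ : ‖Z‖ ≤ L * ‖w‖ := PiLp.norm_le_mul_of_forall_norm_apply_le hL fun n => hK _ _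
  calc ‖periodicEulerOp τ B K u - periodicEulerOp τ B K v‖
      ≤ |τ|⁻¹ * ‖X‖ + ‖Z‖ := by
        rw [hsplit]
        refine (norm_add_le _ _).trans ?_
        rw [norm_smul, one_div, norm_inv, Real.norm_eq_abs]
    _ ≤ |τ|⁻¹ * (2 * ‖B‖ * ‖w‖) + L * ‖w‖ := by gcongr
    _ = (2 * ‖B‖ / |τ| + L) * ‖w‖ := by ring

end PeriodicEuler

/-- Theorem 2 of the paper: unique solvability of the implicit-Euler
time-discretization of the nonlinear time-periodic evolution problem. -/
theorem stmt_0 {V : Type*} [NormedAddCommGroup V] [InnerProductSpace ℝ V]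
    [CompleteSpace V]
    (N : ℕ) [NeZero N] (τ : ℝ) (hτ : 0 < τ)
    (B : V →L[ℝ] V)
    (hBsymm : ∀ u v : V, ⟪B u, v⟫ = ⟪u, B v⟫)
    (hBnonneg : ∀ u : V, 0 ≤ ⟪B u, u⟫)
    (K : V → V) (γ : ℝ) (hγ : 0 < γ)
    (hKmono : ∀ u v : V, γ * ‖u - v‖ ^ 2 ≤ ⟪K u - K v, u - v⟫)
    (L : ℝ) (hL : 0 ≤ L)
    (hKlip : ∀ u v : V, ‖K u - K v‖ ≤ L * ‖u - v‖)
    (f : ZMod N → V) :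
    ∃! u : ZMod N → V, ∀ n : ZMod N,
      (1 / τ) • B (u n - u (n - 1)) + K (u n) = f n := by
  have hB : B.IsPositive := ⟨hBsymm, hBnonneg⟩
  have hmono := periodicEulerOp_strongly_monotone (N := N) hτ.le hB hKmono
  have hlip := periodicEulerOp_lipschitz (N := N) (τ := τ) (B := B) hL hKlip
  have hbij : Function.Bijective (periodicEulerOp (N := N) τ B K) :=
    ⟨injective_of_strongly_monotone hγ hmono,
      surjective_of_strongly_monotone_of_lipschitz hγ (by positivity) hmono hlip⟩
  obtain ⟨u, hu, huniq⟩ := hbij.existsUnique (WithLp.toLp 2 f)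
  refine ⟨u.ofLp, fun n => congrFun (congrArg WithLp.ofLp hu) n, fun v hv => ?_⟩
  exact congrArg WithLp.ofLp (huniq (WithLp.toLp 2 v) (congrArg (WithLp.toLp 2) (funext hv)))
end

section
/- Let V be a real Hilbert space, N ≥ 1 a natural number and τ > 0. Let B : V →L[ℝ] V be continuous linear, symmetric (⟪B u, v⟫ = ⟪u, B v⟫) and nonnegative (⟪B u, u⟫ ≥ 0), and let K : V → V be strongly monotone with constant γ > 0 (⟪K u − K v, u − v⟫ ≥ γ‖u − v‖²). Define A : (ZMod N → V) → (ZMod N → V) by (A u) n = (1/τ) • B (u n − u (n − 1)) + K (u n). Then for all u, v : ZMod N → V: ∑_{n : ZMod N} ⟪(A u) n − (A v) n, u n − v n⟫ ≥ γ · ∑_{n : ZMod N} ‖u n − v n‖². -/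
open RealInnerProductSpace

/-- Strong monotonicity (with constant γ, uniformly in τ and N) of the block
operator A associated with the implicit-Euler discretization of the
time-periodic problem (proof of Theorem 2). -/
theorem stmt_1 {V : Type*} [NormedAddCommGroup V] [InnerProductSpace ℝ V]
    [CompleteSpace V]
    (N : ℕ) [NeZero N] (τ : ℝ) (hτ : 0 < τ)
    (B : V →L[ℝ] V)
    (hBsymm : ∀ u v : V, ⟪B u, v⟫ = ⟪u, B v⟫)
    (hBnonneg : ∀ u : V, 0 ≤ ⟪B u, u⟫)
    (K : V → V) (γ : ℝ) (hγ : 0 < γ)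
    (hKmono : ∀ u v : V, γ * ‖u - v‖ ^ 2 ≤ ⟪K u - K v, u - v⟫)
    (A : (ZMod N → V) → (ZMod N → V))
    (hA : ∀ (u : ZMod N → V) (n : ZMod N),
      A u n = (1 / τ) • B (u n - u (n - 1)) + K (u n)) :
    ∀ u v : ZMod N → V,
      γ * ∑ n : ZMod N, ‖u n - v n‖ ^ 2 ≤
        ∑ n : ZMod N, ⟪A u n - A v n, u n - v n⟫ := by
  intro u v
  set w : ZMod N → V := fun n => u n - v n with hw
  -- rewrite each summand
  have hsummand : ∀ n : ZMod N,
      ⟪A u n - A v n, u n - v n⟫ =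
        (1 / τ) * ⟪B (w n - w (n - 1)), w n⟫ + ⟪K (u n) - K (v n), w n⟫ := by
    intro n
    have : A u n - A v n
        = (1 / τ) • B (w n - w (n - 1)) + (K (u n) - K (v n)) := by
      rw [hA, hA]
      simp only [hw]
      conv_rhs => rw [show u n - v n - (u (n - 1) - v (n - 1))
            = (u n - u (n - 1)) - (v n - v (n - 1)) by abel,
          map_sub, smul_sub]
      abel
    rw [this]
    rw [inner_add_left, real_inner_smul_left]
  rw [Finset.sum_congr rfl (fun n _ => hsummand n)]
  rw [Finset.sum_add_distrib]
  have hK : γ * ∑ n : ZMod N, ‖w n‖ ^ 2 ≤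
      ∑ n : ZMod N, ⟪K (u n) - K (v n), w n⟫ := by
    rw [Finset.mul_sum]
    exact Finset.sum_le_sum fun n _ => hKmono (u n) (v n)
  have hB : 0 ≤ ∑ n : ZMod N, (1 / τ) * ⟪B (w n - w (n - 1)), w n⟫ := by
    have key : 0 ≤ ∑ n : ZMod N, ⟪B (w n - w (n - 1)), w n⟫ := by
      -- pointwise: ⟪B(a-b), a⟫ ≥ (⟪Ba,a⟫ - ⟪Bb,b⟫)/2
      have pt : ∀ a b : V,
          (⟪B a, a⟫ - ⟪B b, b⟫) / 2 ≤ ⟪B (a - b), a⟫ := by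
        intro a b
        have h0 := hBnonneg (a - b)
        have hexp : ⟪B (a - b), a - b⟫
            = ⟪B a, a⟫ - 2 * ⟪B b, a⟫ + ⟪B b, b⟫ := by
          rw [map_sub, inner_sub_left, inner_sub_right, inner_sub_right]
          have : ⟪B a, b⟫ = ⟪B b, a⟫ := by
            rw [hBsymm a b, real_inner_comm]
          rw [this]; ring
        have hBab : ⟪B b, a⟫ ≤ (⟪B a, a⟫ + ⟪B b, b⟫) / 2 := by nlinarith [h0, hexp]
        have hexp2 : ⟪B (a - b), a⟫ = ⟪B a, a⟫ - ⟪B b, a⟫ := by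
          rw [map_sub, inner_sub_left]
        linarith
      have htele : ∑ n : ZMod N, (⟪B (w n), w n⟫ - ⟪B (w (n-1)), w (n-1)⟫) = 0 := by
        rw [Finset.sum_sub_distrib]
        have : ∑ n : ZMod N, ⟪B (w (n-1)), w (n-1)⟫
            = ∑ n : ZMod N, ⟪B (w n), w n⟫ :=
          Fintype.sum_equiv (Equiv.subRight (1 : ZMod N)) _ _ (fun n => rfl)
        rw [this, sub_self]
      calc (0:ℝ) = (∑ n : ZMod N, (⟪B (w n), w n⟫ - ⟪B (w (n-1)), w (n-1)⟫)) / 2 := by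
              rw [htele]; norm_num
        _ = ∑ n : ZMod N, (⟪B (w n), w n⟫ - ⟪B (w (n-1)), w (n-1)⟫) / 2 := by
              rw [Finset.sum_div]
        _ ≤ ∑ n : ZMod N, ⟪B (w n - w (n-1)), w n⟫ :=
              Finset.sum_le_sum fun n _ => pt (w n) (w (n-1))
    rw [← Finset.mul_sum]
    positivity
  linarith
end

section
/- Let V be a real Hilbert space, N ≥ 1 a natural number, and let B : V →L[ℝ] V be a continuous linear operator that is symmetric (⟪B u, v⟫ = ⟪u, B v⟫ for all u, v) and nonnegative (⟪B u, u⟫ ≥ 0 for all u). Then for every a : ZMod N → V one has ∑_{n : ZMod N} ⟪B (a n − a (n − 1)), a n⟫ ≥ 0. -/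
open RealInnerProductSpace

/-- Key telescoping estimate in the proof of Theorem 2: for a symmetric
nonnegative operator B and a cyclic sequence, the cyclic sum of the
backward-difference terms is nonnegative. -/
theorem stmt_3 {V : Type*} [NormedAddCommGroup V] [InnerProductSpace ℝ V]
    [CompleteSpace V]
    (N : ℕ) [NeZero N]
    (B : V →L[ℝ] V)
    (hBsymm : ∀ u v : V, ⟪B u, v⟫ = ⟪u, B v⟫)
    (hBnonneg : ∀ u : V, 0 ≤ ⟪B u, u⟫) :
    ∀ a : ZMod N → V, 0 ≤ ∑ n : ZMod N, ⟪B (a n - a (n - 1)), a n⟫ := by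
  intro a
  have key : ∀ n : ZMod N, 2 * ⟪B (a n - a (n - 1)), a n⟫ =
      (⟪B (a n), a n⟫ - ⟪B (a (n - 1)), a (n - 1)⟫)
        + ⟪B (a n - a (n - 1)), a n - a (n - 1)⟫ := by
    intro n
    have h := hBsymm (a (n - 1)) (a n)
    simp only [map_sub, inner_sub_left, inner_sub_right]
    have h2 : ⟪a (n-1), B (a n)⟫ = ⟪B (a n), a (n-1)⟫ := real_inner_comm _ _
    rw [h2] at h
    linarith
  have hsum : 2 * ∑ n : ZMod N, ⟪B (a n - a (n - 1)), a n⟫ =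
      (∑ n : ZMod N, (⟪B (a n), a n⟫ - ⟪B (a (n - 1)), a (n - 1)⟫))
        + ∑ n : ZMod N, ⟪B (a n - a (n - 1)), a n - a (n - 1)⟫ := by
    rw [Finset.mul_sum, ← Finset.sum_add_distrib]
    exact Finset.sum_congr rfl fun n _ => key n
  have htel : (∑ n : ZMod N, (⟪B (a n), a n⟫ - ⟪B (a (n - 1)), a (n - 1)⟫)) = 0 := by
    rw [Finset.sum_sub_distrib]
    have := Fintype.sum_equiv (Equiv.subRight (1 : ZMod N))
      (fun n => ⟪B (a (n - 1)), a (n - 1)⟫) (fun n => ⟪B (a n), a n⟫) (fun n => rfl)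
    rw [this, sub_self]
  have hpos : 0 ≤ ∑ n : ZMod N, ⟪B (a n - a (n - 1)), a n - a (n - 1)⟫ :=
    Finset.sum_nonneg fun n _ => hBnonneg _
  linarith
end

section
/- Let V be a real Hilbert space, N ≥ 1, τ > 0. Let B : V →L[ℝ] V be continuous linear, symmetric and nonnegative; let K : V → V be strongly monotone with constant γ > 0 and Lipschitz with constant L; let f : ZMod N → V. Let K̂ : V ≃L[ℝ] V be a continuous linear equivalence that is symmetric (⟪K̂ u, v⟫ = ⟪u, K̂ v⟫) and elliptic (there is c > 0 with ⟪K̂ u, u⟫ ≥ c‖u‖² for all u). Assume there is q with 0 ≤ q < 1 such that for all u, v ∈ V, setting r = K̂ (u − v) − (K u − K v), one has ⟪K̂⁻¹ r, r⟫ ≤ q² ⟪K̂ (u − v), u − v⟫. Let u : ZMod N → V satisfy (1/τ) • B (u n − u (n−1)) + K (u n) = f n for all n, and let U : ℕ → (ZMod N → V) be any sequence such that for every k and every n, (1/τ) • B (U (k+1) n − U (k+1) (n−1)) + K̂ (U (k+1) n) = f n + K̂ (U k n) − K (U k n). Then for every k: ∑_{n} ⟪K̂ (U (k+1) n − u n),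 U (k+1) n − u n⟫ ≤ q² · ∑_{n} ⟪K̂ (U k n − u n), U k n − u n⟫. -/
open RealInnerProductSpace

/-- Telescoping nonnegativity: for a symmetric nonnegative operator `B` and a
periodic sequence `e : ZMod N → V`, the sum `∑ ⟪B (e n - e (n-1)), e n⟫` is
nonnegative. -/
lemma tele_nonneg {V : Type*} [NormedAddCommGroup V] [InnerProductSpace ℝ V]
    (N : ℕ) [NeZero N]
    (B : V →L[ℝ] V)
    (hBsymm : ∀ u v : V, ⟪B u, v⟫ = ⟪u, B v⟫)
    (hBnonneg : ∀ u : V, 0 ≤ ⟪B u, u⟫)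
    (e : ZMod N → V) :
    0 ≤ ∑ n : ZMod N, ⟪B (e n - e (n - 1)), e n⟫ := by
  have key : ∀ x y : V, ⟪B (x - y), x⟫
      = (⟪B x, x⟫ - ⟪B y, y⟫) / 2 + ⟪B (x - y), x - y⟫ / 2 := by
    intro x y
    have h1 : ⟪B y, x⟫ = ⟪B x, y⟫ := by rw [hBsymm y x, real_inner_comm]
    simp only [map_sub, inner_sub_left, inner_sub_right]
    linarith
  have hshift : ∑ n : ZMod N, ⟪B (e (n - 1)), e (n - 1)⟫
      = ∑ n : ZMod N, ⟪B (e n), e n⟫ :=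
    Fintype.sum_equiv (Equiv.subRight (1 : ZMod N))
      (fun n => ⟪B (e (n - 1)), e (n - 1)⟫) (fun n => ⟪B (e n), e n⟫)
      (fun n => rfl)
  have hsum : ∑ n : ZMod N, ⟪B (e n - e (n - 1)), e n⟫
      = ∑ n : ZMod N, ((⟪B (e n), e n⟫ - ⟪B (e (n - 1)), e (n - 1)⟫) / 2
          + ⟪B (e n - e (n - 1)), e n - e (n - 1)⟫ / 2) :=
    Finset.sum_congr rfl (fun n _ => key (e n) (e (n - 1)))
  rw [hsum, Finset.sum_add_distrib]
  have h0 : ∑ n : ZMod N, (⟪B (e n), e n⟫ - ⟪B (e (n - 1)), e (n - 1)⟫) / 2 = 0 := by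
    rw [← Finset.sum_div, Finset.sum_sub_distrib, hshift, sub_self, zero_div]
  rw [h0, zero_add]
  exact Finset.sum_nonneg fun n _ => by
    have := hBnonneg (e n - e (n - 1)); linarith

/-- Cauchy–Schwarz for the bilinear form induced by a symmetric elliptic
operator. -/
lemma khat_cs {V : Type*} [NormedAddCommGroup V] [InnerProductSpace ℝ V]
    (Khat : V ≃L[ℝ] V)
    (hKhatsymm : ∀ u v : V, ⟪Khat u, v⟫ = ⟪u, Khat v⟫)
    (c : ℝ) (hc : 0 < c)
    (hKhatell : ∀ u : V, c * ‖u‖ ^ 2 ≤ ⟪Khat u, u⟫)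
    (x y : V) :
    ⟪Khat x, y⟫ ≤ Real.sqrt ⟪Khat x, x⟫ * Real.sqrt ⟪Khat y, y⟫ := by
  have hnn : ∀ z : V, 0 ≤ ⟪Khat z, z⟫ := fun z =>
    le_trans (by positivity) (hKhatell z)
  have hsymm : ∀ a b : V, ⟪Khat a, b⟫ = ⟪Khat b, a⟫ := by
    intro a b; rw [hKhatsymm a b, real_inner_comm]
  have hquad : ∀ t : ℝ, 0 ≤ ⟪Khat y, y⟫ * (t * t) + (2 * ⟪Khat x, y⟫) * t
      + ⟪Khat x, x⟫ := by
    intro t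
    have h := hnn (x + t • y)
    have hexp : ⟪Khat (x + t • y), x + t • y⟫
        = ⟪Khat y, y⟫ * (t * t) + (2 * ⟪Khat x, y⟫) * t + ⟪Khat x, x⟫ := by
      have hyx : ⟪Khat y, x⟫ = ⟪Khat x, y⟫ := hsymm y x
      simp only [map_add, map_smul, inner_add_left, inner_add_right,
        real_inner_smul_left, real_inner_smul_right]
      rw [hyx]; ring
    linarith [hexp ▸ h]
  have hd := discrim_le_zero hquad
  rw [discrim] at hd
  have hsq : ⟪Khat x, y⟫ ^ 2 ≤ ⟪Khat x, x⟫ * ⟪Khat y, y⟫ := by nlinarith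
  calc ⟪Khat x, y⟫ ≤ |⟪Khat x, y⟫| := le_abs_self _
    _ = Real.sqrt (⟪Khat x, y⟫ ^ 2) := (Real.sqrt_sq_eq_abs _).symm
    _ ≤ Real.sqrt (⟪Khat x, x⟫ * ⟪Khat y, y⟫) := Real.sqrt_le_sqrt hsq
    _ = Real.sqrt ⟪Khat x, x⟫ * Real.sqrt ⟪Khat y, y⟫ :=
        Real.sqrt_mul (hnn x) _

/-- Theorem 3: one-step contraction of the preconditioned fixed-point
iteration for the discretized nonlinear time-periodic problem, in the
K̂-norm, with factor q independent of τ and N. -/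
theorem stmt_4 {V : Type*} [NormedAddCommGroup V] [InnerProductSpace ℝ V]
    [CompleteSpace V]
    (N : ℕ) [NeZero N] (τ : ℝ) (hτ : 0 < τ)
    (B : V →L[ℝ] V)
    (hBsymm : ∀ u v : V, ⟪B u, v⟫ = ⟪u, B v⟫)
    (hBnonneg : ∀ u : V, 0 ≤ ⟪B u, u⟫)
    (K : V → V) (γ : ℝ) (hγ : 0 < γ)
    (hKmono : ∀ u v : V, γ * ‖u - v‖ ^ 2 ≤ ⟪K u - K v, u - v⟫)
    (L : ℝ) (hKlip : ∀ u v : V, ‖K u - K v‖ ≤ L * ‖u - v‖)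
    (f : ZMod N → V)
    (Khat : V ≃L[ℝ] V)
    (hKhatsymm : ∀ u v : V, ⟪Khat u, v⟫ = ⟪u, Khat v⟫)
    (c : ℝ) (hc : 0 < c)
    (hKhatell : ∀ u : V, c * ‖u‖ ^ 2 ≤ ⟪Khat u, u⟫)
    (q : ℝ) (hq0 : 0 ≤ q) (hq1 : q < 1)
    (hA3 : ∀ u v : V,
      ⟪Khat.symm (Khat (u - v) - (K u - K v)), Khat (u - v) - (K u - K v)⟫ ≤
        q ^ 2 * ⟪Khat (u - v), u - v⟫)
    (u : ZMod N → V)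
    (hu : ∀ n : ZMod N, (1 / τ) • B (u n - u (n - 1)) + K (u n) = f n)
    (U : ℕ → ZMod N → V)
    (hU : ∀ (k : ℕ) (n : ZMod N),
      (1 / τ) • B (U (k + 1) n - U (k + 1) (n - 1)) + Khat (U (k + 1) n) =
        f n + Khat (U k n) - K (U k n)) :
    ∀ k : ℕ,
      ∑ n : ZMod N, ⟪Khat (U (k + 1) n - u n), U (k + 1) n - u n⟫ ≤
        q ^ 2 * ∑ n : ZMod N, ⟪Khat (U k n - u n), U k n - u n⟫ := by
  intro k
  have hnn : ∀ z : V, 0 ≤ ⟪Khat z, z⟫ := fun z =>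
    le_trans (by positivity) (hKhatell z)
  set e : ZMod N → V := fun n => U (k + 1) n - u n with he
  set ε : ZMod N → V := fun n => U k n - u n with hε
  set r : ZMod N → V := fun n => Khat (U k n - u n) - (K (U k n) - K (u n)) with hr
  -- the error equation
  have heq : ∀ n : ZMod N,
      Khat (e n) + (1 / τ) • B (e n - e (n - 1)) = r n := by
    intro n
    have h1 := hu n
    have h2 := hU k n
    have hd : e n - e (n - 1)
        = (U (k + 1) n - U (k + 1) (n - 1)) - (u n - u (n - 1)) := by
      simp only [he]; abel
    rw [hd, map_sub B, smul_sub]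
    have hs2 : (1 / τ) • B (U (k + 1) n - U (k + 1) (n - 1))
        = f n + Khat (U k n) - K (U k n) - Khat (U (k + 1) n) := by
      rw [← h2]; abel
    have hs1 : (1 / τ) • B (u n - u (n - 1)) = f n - K (u n) := by
      rw [← h1]; abel
    rw [hs2, hs1]
    simp only [he, hr, map_sub]
    abel
  -- inner-product form of the error equation
  have hip : ∀ n : ZMod N, ⟪Khat (e n), e n⟫
      = ⟪r n, e n⟫ - (1 / τ) * ⟪B (e n - e (n - 1)), e n⟫ := by
    intro n
    have h := heq n
    have : ⟪Khat (e n) + (1 / τ) • B (e n - e (n - 1)), e n⟫ = ⟪r n, e n⟫ := by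
      rw [h]
    rw [inner_add_left, real_inner_smul_left] at this
    linarith
  set S : ℝ := ∑ n : ZMod N, ⟪Khat (e n), e n⟫ with hS
  set A : ℝ := ∑ n : ZMod N, ⟪Khat (ε n), ε n⟫ with hA
  -- Step 1 : S ≤ ∑ ⟪r n, e n⟫
  have step1 : S ≤ ∑ n : ZMod N, ⟪r n, e n⟫ := by
    have hsum : S = (∑ n : ZMod N, ⟪r n, e n⟫)
        - (1 / τ) * ∑ n : ZMod N, ⟪B (e n - e (n - 1)), e n⟫ := by
      rw [hS, Finset.sum_congr rfl (fun n _ => hip n), Finset.sum_sub_distrib,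
        ← Finset.mul_sum]
    have htele := tele_nonneg N B hBsymm hBnonneg e
    have hτ' : 0 < 1 / τ := by positivity
    nlinarith
  -- Step 2 : pointwise bound on ⟪r n, e n⟫
  have step2 : ∀ n : ZMod N, ⟪r n, e n⟫
      ≤ q * (Real.sqrt ⟪Khat (ε n), ε n⟫ * Real.sqrt ⟪Khat (e n), e n⟫) := by
    intro n
    set s : V := Khat.symm (r n) with hs
    have h1 : ⟪r n, e n⟫ = ⟪Khat s, e n⟫ := by
      rw [hs, Khat.apply_symm_apply]
    have h2 : ⟪Khat s, s⟫ = ⟪Khat.symm (r n), r n⟫ := by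
      rw [hs, Khat.apply_symm_apply, real_inner_comm]
    have h3 : ⟪Khat.symm (r n), r n⟫ ≤ q ^ 2 * ⟪Khat (ε n), ε n⟫ := by
      have := hA3 (U k n) (u n)
      simpa only [hr, hε] using this
    have hcs := khat_cs Khat hKhatsymm c hc hKhatell s (e n)
    have h4 : Real.sqrt ⟪Khat s, s⟫ ≤ q * Real.sqrt ⟪Khat (ε n), ε n⟫ := by
      have h5 : ⟪Khat s, s⟫ ≤ q ^ 2 * ⟪Khat (ε n), ε n⟫ := h2 ▸ h3
      calc Real.sqrt ⟪Khat s, s⟫ ≤ Real.sqrt (q ^ 2 * ⟪Khat (ε n), ε n⟫) :=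
            Real.sqrt_le_sqrt h5
        _ = q * Real.sqrt ⟪Khat (ε n), ε n⟫ := by
            rw [Real.sqrt_mul (sq_nonneg q), Real.sqrt_sq hq0]
    calc ⟪r n, e n⟫ = ⟪Khat s, e n⟫ := h1
      _ ≤ Real.sqrt ⟪Khat s, s⟫ * Real.sqrt ⟪Khat (e n), e n⟫ := hcs
      _ ≤ q * Real.sqrt ⟪Khat (ε n), ε n⟫ * Real.sqrt ⟪Khat (e n), e n⟫ := by
          apply mul_le_mul_of_nonneg_right h4 (Real.sqrt_nonneg _)
      _ = q * (Real.sqrt ⟪Khat (ε n), ε n⟫ * Real.sqrt ⟪Khat (e n), e n⟫) := by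
          ring
  -- Step 3 : S ≤ q * √A * √S
  have step3 : S ≤ q * (Real.sqrt A * Real.sqrt S) := by
    calc S ≤ ∑ n : ZMod N, ⟪r n, e n⟫ := step1
      _ ≤ ∑ n : ZMod N,
            q * (Real.sqrt ⟪Khat (ε n), ε n⟫ * Real.sqrt ⟪Khat (e n), e n⟫) :=
          Finset.sum_le_sum fun n _ => step2 n
      _ = q * ∑ n : ZMod N,
            Real.sqrt ⟪Khat (ε n), ε n⟫ * Real.sqrt ⟪Khat (e n), e n⟫ := by
          rw [Finset.mul_sum]
      _ ≤ q * (Real.sqrt A * Real.sqrt S) := by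
          apply mul_le_mul_of_nonneg_left _ hq0
          exact Real.sum_sqrt_mul_sqrt_le _ (fun n => hnn _) (fun n => hnn _)
  -- Step 4 : conclude
  have hSnn : 0 ≤ S := Finset.sum_nonneg fun n _ => hnn _
  have hAnn : 0 ≤ A := Finset.sum_nonneg fun n _ => hnn _
  show S ≤ q ^ 2 * A
  have hsqS : Real.sqrt S ^ 2 = S := Real.sq_sqrt hSnn
  have hsqA : Real.sqrt A ^ 2 = A := Real.sq_sqrt hAnn
  rcases eq_or_lt_of_le (Real.sqrt_nonneg S) with h0 | h0
  · have : S = 0 := by rw [← hsqS, ← h0]; ring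
    rw [this]; positivity
  · have h5 : Real.sqrt S * Real.sqrt S ≤ q * Real.sqrt A * Real.sqrt S := by
      nlinarith
    have h6 : Real.sqrt S ≤ q * Real.sqrt A :=
      le_of_mul_le_mul_right (by linarith [h5]) h0
    nlinarith
end

section
/- Let V be a real Hilbert space, N ≥ 1, τ > 0. Let B : V →L[ℝ] V be continuous linear, symmetric and nonnegative; let K : V → V be strongly monotone with constant γ > 0 and Lipschitz with constant L; let f : ZMod N → V. Let K̂ : V ≃L[ℝ] V be a continuous linear equivalence that is symmetric and elliptic (⟪K̂ u, u⟫ ≥ c‖u‖² for some c > 0). Assume there is q with 0 ≤ q < 1 such that for all u, v ∈ V, with r = K̂ (u − v) − (K u − K v), one has ⟪K̂⁻¹ r, r⟫ ≤ q² ⟪K̂ (u − v), u − v⟫. Let u : ZMod N → V satisfy (1/τ) • B (u n − u (n−1)) + K (u n) = f n for all n, and let U : ℕ → (ZMod N → V) satisfy, for every k and n, (1/τ) • B (U (k+1) n − U (k+1) (n−1)) + K̂ (U (k+1) n) = f n + K̂ (U k n) − K (U k n). Then for every k: ∑_{n} ⟪K̂ (U k n − u n), U k n − u n⟫ ≤ q^{2k}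 · ∑_{n} ⟪K̂ (U 0 n − u n), U 0 n − u n⟫, and for every n the sequence (U k n) converges to u n in V as k → ∞. -/
/-!
The error `e = U (k+1) - u` solves the linear periodic problem
`(1/τ) B (e n - e (n-1)) + K̂ e n = r n` with `r n = K̂ (U k n - u n) - (K (U k n) - K (u n))`.
Pairing with `e n` and summing over the period, the `B`-term is nonnegative (a telescoping sum
of `⟪B e, e⟫` plus squares), so `‖e‖²_K̂ ≤ ∑ ⟪r n, e n⟫`. Young's inequality in the `K̂`-form,
`2 ⟪r, e⟫ ≤ ⟪K̂⁻¹ r, r⟫ + ⟪K̂ e, e⟫`, together with (A3) gives `‖e‖²_K̂ ≤ q² ‖U k - u‖²_K̂`.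
Iterating gives the geometric bound, and ellipticity turns it into convergence in `V`.
-/

open RealInnerProductSpace Filter Topology

section PeriodicEnergy

variable {V F : Type*} [NormedAddCommGroup V] [InnerProductSpace ℝ V]
  [FunLike F V V] [LinearMapClass F ℝ V V]

theorem two_mul_inner_map_le_of_symm_of_nonneg (T : F)
    (hsymm : ∀ u v : V, ⟪T u, v⟫ = ⟪u, T v⟫) (hpos : ∀ u : V, 0 ≤ ⟪T u, u⟫) (a b : V) :
    2 * ⟪T a, b⟫ ≤ ⟪T a, a⟫ + ⟪T b, b⟫ := by
  have hba : ⟪T b, a⟫ = ⟪T a, b⟫ := by rw [hsymm, real_inner_comm]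
  have := hpos (a - b)
  simp only [map_sub, inner_sub_left, inner_sub_right, hba] at this
  linarith

theorem sum_inner_sub_comp_perm_nonneg {ι : Type*} [Fintype ι] (B : F)
    (hsymm : ∀ u v : V, ⟪B u, v⟫ = ⟪u, B v⟫) (hpos : ∀ u : V, 0 ≤ ⟪B u, u⟫)
    (σ : Equiv.Perm ι) (e : ι → V) :
    0 ≤ ∑ i, ⟪B (e i - e (σ i)), e i⟫ := by
  -- `2 ⟪B (x - y), x⟫ = ⟪B x, x⟫ - ⟪B y, y⟫ + ⟪B (x - y), x - y⟫`, and the middle terms cancel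
  -- in the sum because `σ` permutes the indices.
  have hpoint : ∀ i, ⟪B (e i), e i⟫ - ⟪B (e (σ i)), e (σ i)⟫ ≤ 2 * ⟪B (e i - e (σ i)), e i⟫ := by
    intro i
    have := two_mul_inner_map_le_of_symm_of_nonneg B hsymm hpos (e (σ i)) (e i)
    simp only [map_sub, inner_sub_left]
    linarith
  have hcancel : ∑ i, (⟪B (e i), e i⟫ - ⟪B (e (σ i)), e (σ i)⟫) = 0 := by
    rw [Finset.sum_sub_distrib, Equiv.sum_comp σ (fun i => ⟪B (e i), e i⟫), sub_self]
  have := Finset.sum_le_sum fun i (_ : i ∈ Finset.univ) => hpoint i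
  rw [hcancel, ← Finset.mul_sum] at this
  linarith

theorem sum_inner_map_le_of_periodic_eq {ι : Type*} [Fintype ι] (B : F) (T : V → V)
    (hsymm : ∀ u v : V, ⟪B u, v⟫ = ⟪u, B v⟫) (hpos : ∀ u : V, 0 ≤ ⟪B u, u⟫)
    (σ : Equiv.Perm ι) {t : ℝ} (ht : 0 ≤ t) (e r : ι → V)
    (h : ∀ i, t • B (e i - e (σ i)) + T (e i) = r i) :
    ∑ i, ⟪T (e i), e i⟫ ≤ ∑ i, ⟪r i, e i⟫ := by
  have hB := mul_nonneg ht (sum_inner_sub_comp_perm_nonneg B hsymm hpos σ e)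
  have hsplit : ∑ i, ⟪r i, e i⟫ = t * ∑ i, ⟪B (e i - e (σ i)), e i⟫ + ∑ i, ⟪T (e i), e i⟫ := by
    simp only [← h, inner_add_left, real_inner_smul_left, Finset.sum_add_distrib, Finset.mul_sum]
  linarith

theorem iterate_error_eq {G ι : Type*} [FunLike G V V] [LinearMapClass G ℝ V V] (B : F) (T : G)
    (K : V → V) (σ : Equiv.Perm ι) (t : ℝ) (f u U U' : ι → V)
    (hu : ∀ i, t • B (u i - u (σ i)) + K (u i) = f i)
    (hU : ∀ i, t • B (U' i - U' (σ i)) + T (U' i) = f i + T (U i) - K (U i)) (i : ι) :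
    t • B ((U' i - u i) - (U' (σ i) - u (σ i))) + T (U' i - u i) =
      T (U i - u i) - (K (U i) - K (u i)) := by
  rw [sub_sub_sub_comm, map_sub B, smul_sub, eq_sub_of_add_eq (hU i), eq_sub_of_add_eq (hu i),
    map_sub T, map_sub T]
  abel

theorem sum_inner_iterate_error_le (B : F) (hsymm : ∀ u v : V, ⟪B u, v⟫ = ⟪u, B v⟫)
    (hpos : ∀ u : V, 0 ≤ ⟪B u, u⟫) (T : V ≃L[ℝ] V) (hTsymm : ∀ u v : V, ⟪T u, v⟫ = ⟪u, T v⟫)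
    (hTpos : ∀ u : V, 0 ≤ ⟪T u, u⟫) (K : V → V) (q : ℝ)
    (hA3 : ∀ u v : V,
      ⟪T.symm (T (u - v) - (K u - K v)), T (u - v) - (K u - K v)⟫ ≤ q ^ 2 * ⟪T (u - v), u - v⟫)
    {ι : Type*} [Fintype ι] (σ : Equiv.Perm ι) {t : ℝ} (ht : 0 ≤ t) (f u U U' : ι → V)
    (hu : ∀ i, t • B (u i - u (σ i)) + K (u i) = f i)
    (hU : ∀ i, t • B (U' i - U' (σ i)) + T (U' i) = f i + T (U i) - K (U i)) :
    ∑ i, ⟪T (U' i - u i), U' i - u i⟫ ≤ q ^ 2 * ∑ i, ⟪T (U i - u i), U i - u i⟫ := by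
  set r : ι → V := fun i => T (U i - u i) - (K (U i) - K (u i))
  have henergy := sum_inner_map_le_of_periodic_eq B T hsymm hpos σ ht (fun i => U' i - u i) r
    (iterate_error_eq B T K σ t f u U U' hu hU)
  have hyoung : ∀ i, 2 * ⟪r i, U' i - u i⟫ ≤
      q ^ 2 * ⟪T (U i - u i), U i - u i⟫ + ⟪T (U' i - u i), U' i - u i⟫ := by
    intro i
    have := two_mul_inner_map_le_of_symm_of_nonneg T hTsymm hTpos (T.symm (r i)) (U' i - u i)
    rw [T.apply_symm_apply, real_inner_comm (T.symm (r i))] at this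
    linarith [hA3 (U i) (u i)]
  have := Finset.sum_le_sum fun i (_ : i ∈ Finset.univ) => hyoung i
  rw [← Finset.mul_sum, Finset.sum_add_distrib, ← Finset.mul_sum] at this
  linarith

end PeriodicEnergy

theorem tendsto_of_mul_sq_norm_sub_le_geometric {E : Type*} [NormedAddCommGroup E]
    {x : ℕ → E} {y : E} {c C ρ : ℝ} (hc : 0 < c) (hρ0 : 0 ≤ ρ) (hρ1 : ρ < 1)
    (h : ∀ k, c * ‖x k - y‖ ^ 2 ≤ ρ ^ k * C) :
    Tendsto x atTop (𝓝 y) := by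
  have hgeom : Tendsto (fun k => ρ ^ k * C / c) atTop (𝓝 0) := by
    simpa using ((tendsto_pow_atTop_nhds_zero_of_lt_one hρ0 hρ1).mul_const C).div_const c
  have hsq : Tendsto (fun k => ‖x k - y‖ ^ 2) atTop (𝓝 0) :=
    squeeze_zero (fun k => sq_nonneg _) (fun k => (le_div_iff₀' hc).2 (h k)) hgeom
  rw [tendsto_iff_norm_sub_tendsto_zero]
  simpa using hsq.sqrt

theorem stmt_5_general {V : Type*} [NormedAddCommGroup V] [InnerProductSpace ℝ V]
    (N : ℕ) [NeZero N] (τ : ℝ) (hτ : 0 < τ)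
    (B : V →L[ℝ] V)
    (hBsymm : ∀ u v : V, ⟪B u, v⟫ = ⟪u, B v⟫)
    (hBnonneg : ∀ u : V, 0 ≤ ⟪B u, u⟫)
    (K : V → V)
    (L : ℝ)
    (f : ZMod N → V)
    (Khat : V ≃L[ℝ] V)
    (hKhatsymm : ∀ u v : V, ⟪Khat u, v⟫ = ⟪u, Khat v⟫)
    (c : ℝ) (hc : 0 < c)
    (hKhatell : ∀ u : V, c * ‖u‖ ^ 2 ≤ ⟪Khat u, u⟫)
    (q : ℝ) (hq0 : 0 ≤ q) (hq1 : q < 1)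
    (hA3 : ∀ u v : V,
      ⟪Khat.symm (Khat (u - v) - (K u - K v)), Khat (u - v) - (K u - K v)⟫ ≤
        q ^ 2 * ⟪Khat (u - v), u - v⟫)
    (u : ZMod N → V)
    (hu : ∀ n : ZMod N, (1 / τ) • B (u n - u (n - 1)) + K (u n) = f n)
    (U : ℕ → ZMod N → V)
    (hU : ∀ (k : ℕ) (n : ZMod N),
      (1 / τ) • B (U (k + 1) n - U (k + 1) (n - 1)) + Khat (U (k + 1) n) =
        f n + Khat (U k n) - K (U k n)) :
    (∀ k : ℕ,
      ∑ n : ZMod N, ⟪Khat (U k n - u n), U k n - u n⟫ ≤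
        q ^ (2 * k) * ∑ n : ZMod N, ⟪Khat (U 0 n - u n), U 0 n - u n⟫) ∧
    (∀ n : ZMod N, Tendsto (fun k => U k n) atTop (𝓝 (u n))) := by
  have hKpos : ∀ x : V, 0 ≤ ⟪Khat x, x⟫ := fun x =>
    (mul_nonneg hc.le (sq_nonneg ‖x‖)).trans (hKhatell x)
  set A : ℕ → ℝ := fun k => ∑ n : ZMod N, ⟪Khat (U k n - u n), U k n - u n⟫
  have hgeom : ∀ k, A k ≤ (q ^ 2) ^ k * A 0 := fun k =>
    le_geom (sq_nonneg q) k fun j _ =>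
      sum_inner_iterate_error_le B hBsymm hBnonneg Khat hKhatsymm hKpos K q hA3
        (Equiv.subRight 1) (by positivity) f u (U j) (U (j + 1)) hu (hU j)
  refine ⟨fun k => by simpa only [pow_mul] using hgeom k, fun n => ?_⟩
  have hq2 : q ^ 2 < 1 := by nlinarith
  refine tendsto_of_mul_sq_norm_sub_le_geometric (C := A 0) hc (sq_nonneg q) hq2 fun k => ?_
  calc c * ‖U k n - u n‖ ^ 2 ≤ ⟪Khat (U k n - u n), U k n - u n⟫ := hKhatell _
    _ ≤ A k := Finset.single_le_sum (fun m _ => hKpos (U k m - u m)) (Finset.mem_univ n)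
    _ ≤ (q ^ 2) ^ k * A 0 := hgeom k

/-- Theorem 3, linear convergence: geometric error bound q^k in the K̂-norm
and convergence of the fixed-point iterates to the solution. -/
theorem stmt_5 {V : Type*} [NormedAddCommGroup V] [InnerProductSpace ℝ V]
    [CompleteSpace V]
    (N : ℕ) [NeZero N] (τ : ℝ) (hτ : 0 < τ)
    (B : V →L[ℝ] V)
    (hBsymm : ∀ u v : V, ⟪B u, v⟫ = ⟪u, B v⟫)
    (hBnonneg : ∀ u : V, 0 ≤ ⟪B u, u⟫)
    (K : V → V) (γ : ℝ) (hγ : 0 < γ)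
    (hKmono : ∀ u v : V, γ * ‖u - v‖ ^ 2 ≤ ⟪K u - K v, u - v⟫)
    (L : ℝ) (hKlip : ∀ u v : V, ‖K u - K v‖ ≤ L * ‖u - v‖)
    (f : ZMod N → V)
    (Khat : V ≃L[ℝ] V)
    (hKhatsymm : ∀ u v : V, ⟪Khat u, v⟫ = ⟪u, Khat v⟫)
    (c : ℝ) (hc : 0 < c)
    (hKhatell : ∀ u : V, c * ‖u‖ ^ 2 ≤ ⟪Khat u, u⟫)
    (q : ℝ) (hq0 : 0 ≤ q) (hq1 : q < 1)
    (hA3 : ∀ u v : V,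
      ⟪Khat.symm (Khat (u - v) - (K u - K v)), Khat (u - v) - (K u - K v)⟫ ≤
        q ^ 2 * ⟪Khat (u - v), u - v⟫)
    (u : ZMod N → V)
    (hu : ∀ n : ZMod N, (1 / τ) • B (u n - u (n - 1)) + K (u n) = f n)
    (U : ℕ → ZMod N → V)
    (hU : ∀ (k : ℕ) (n : ZMod N),
      (1 / τ) • B (U (k + 1) n - U (k + 1) (n - 1)) + Khat (U (k + 1) n) =
        f n + Khat (U k n) - K (U k n)) :
    (∀ k : ℕ,
      ∑ n : ZMod N, ⟪Khat (U k n - u n), U k n - u n⟫ ≤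
        q ^ (2 * k) * ∑ n : ZMod N, ⟪Khat (U 0 n - u n), U 0 n - u n⟫) ∧
    (∀ n : ZMod N, Tendsto (fun k => U k n) atTop (𝓝 (u n))) :=
  stmt_5_general N τ hτ B hBsymm hBnonneg K L f Khat hKhatsymm c hc hKhatell q hq0 hq1 hA3 u hu U hU
end

section
/- Let V be a real Hilbert space, N ≥ 1, τ > 0. Let B : V →L[ℝ] V be continuous linear, symmetric (⟪B u, v⟫ = ⟪u, B v⟫) and nonnegative (⟪B u, u⟫ ≥ 0); let K : V → V be any map; let K̂ : V →L[ℝ] V be continuous linear and symmetric; let f : ZMod N → V. Suppose u : ZMod N → V satisfies (1/τ) • B (u n − u (n−1)) + K (u n) = f n for all n, and that v, w : ZMod N → V satisfy (1/τ) • B (w n − w (n−1)) + K̂ (w n) = f n + K̂ (v n) − K (v n) for all n. Then: ∑_{n : ZMod N} ⟪K̂ (w n − u n), w n − u n⟫ ≤ ∑_{n : ZMod N} ⟪K̂ (v n − u n) − (K (v n) − K (u n)), w n − u n⟫. -/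
open RealInnerProductSpace

/-- Central intermediate inequality in the proof of Theorem 3: after testing
the error equation with w − u, the mass terms drop out and only the K̂-energy
of the error and the linearization residual remain. -/
theorem stmt_9 {V : Type*} [NormedAddCommGroup V] [InnerProductSpace ℝ V]
    [CompleteSpace V]
    (N : ℕ) [NeZero N] (τ : ℝ) (hτ : 0 < τ)
    (B : V →L[ℝ] V)
    (hBsymm : ∀ u v : V, ⟪B u, v⟫ = ⟪u, B v⟫)
    (hBnonneg : ∀ u : V, 0 ≤ ⟪B u, u⟫)
    (K : V → V)
    (Khat : V →L[ℝ] V)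
    (hKhatsymm : ∀ u v : V, ⟪Khat u, v⟫ = ⟪u, Khat v⟫)
    (f : ZMod N → V)
    (u : ZMod N → V)
    (hu : ∀ n : ZMod N, (1 / τ) • B (u n - u (n - 1)) + K (u n) = f n)
    (v w : ZMod N → V)
    (hw : ∀ n : ZMod N,
      (1 / τ) • B (w n - w (n - 1)) + Khat (w n) =
        f n + Khat (v n) - K (v n)) :
    ∑ n : ZMod N, ⟪Khat (w n - u n), w n - u n⟫ ≤
      ∑ n : ZMod N, ⟪Khat (v n - u n) - (K (v n) - K (u n)), w n - u n⟫ := by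
  set e : ZMod N → V := fun n => w n - u n with he
  -- key pointwise identity
  have key : ∀ n : ZMod N,
      Khat (e n) + (1 / τ) • B (e n - e (n - 1)) =
        Khat (v n - u n) - (K (v n) - K (u n)) := by
    intro n
    have h3 : ((1 / τ) • B (w n - w (n - 1)) + Khat (w n)) -
        ((1 / τ) • B (u n - u (n - 1)) + K (u n)) =
        (f n + Khat (v n) - K (v n)) - f n := by rw [hw n, hu n]
    calc Khat (e n) + (1 / τ) • B (e n - e (n - 1))
        = (((1 / τ) • B (w n - w (n - 1)) + Khat (w n)) -
            ((1 / τ) • B (u n - u (n - 1)) + K (u n))) +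
            (K (u n) - Khat (u n)) := by
          simp only [he, map_sub, smul_sub]; abel
      _ = ((f n + Khat (v n) - K (v n)) - f n) + (K (u n) - Khat (u n)) := by
          rw [h3]
      _ = Khat (v n - u n) - (K (v n) - K (u n)) := by
          simp only [map_sub]; abel
  -- symmetry of B w.r.t. real inner product
  have hBsym' : ∀ a b : V, ⟪B a, b⟫ = ⟪B b, a⟫ := by
    intro a b
    rw [hBsymm a b, real_inner_comm]
  -- nonnegativity of the cyclic sum
  have hS : 0 ≤ ∑ n : ZMod N, ⟪B (e n - e (n - 1)), e n⟫ := by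
    have h2 : ∀ n : ZMod N, 2 * ⟪B (e n - e (n - 1)), e n⟫ =
        ⟪B (e n - e (n - 1)), e n - e (n - 1)⟫ +
          (⟪B (e n), e n⟫ - ⟪B (e (n - 1)), e (n - 1)⟫) := by
      intro n
      have hsym := hBsym' (e n) (e (n - 1))
      simp only [map_sub, inner_sub_left, inner_sub_right]
      linarith
    have htel : ∑ n : ZMod N, (⟪B (e n), e n⟫ - ⟪B (e (n - 1)), e (n - 1)⟫) = 0 := by
      rw [Finset.sum_sub_distrib]
      have : ∑ n : ZMod N, ⟪B (e (n - 1)), e (n - 1)⟫ =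
          ∑ n : ZMod N, ⟪B (e n), e n⟫ :=
        Fintype.sum_equiv (Equiv.subRight (1 : ZMod N)) _ _ (fun n => rfl)
      rw [this, sub_self]
    have h2S : 0 ≤ 2 * ∑ n : ZMod N, ⟪B (e n - e (n - 1)), e n⟫ := by
      rw [Finset.mul_sum]
      calc (0 : ℝ) ≤ ∑ n : ZMod N, (⟪B (e n - e (n - 1)), e n - e (n - 1)⟫ +
          (⟪B (e n), e n⟫ - ⟪B (e (n - 1)), e (n - 1)⟫)) := by
            rw [Finset.sum_add_distrib, htel, add_zero]
            exact Finset.sum_nonneg fun n _ => hBnonneg _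
        _ = ∑ n : ZMod N, 2 * ⟪B (e n - e (n - 1)), e n⟫ := by
            exact (Finset.sum_congr rfl fun n _ => (h2 n).symm)
    linarith
  -- test the identity with e n and sum
  have hsum : ∑ n : ZMod N, ⟪Khat (e n), e n⟫ =
      ∑ n : ZMod N, ⟪Khat (v n - u n) - (K (v n) - K (u n)), e n⟫ -
        (1 / τ) * ∑ n : ZMod N, ⟪B (e n - e (n - 1)), e n⟫ := by
    rw [Finset.mul_sum, ← Finset.sum_sub_distrib]
    refine Finset.sum_congr rfl fun n _ => ?_
    have := congrArg (fun x => ⟪x, e n⟫) (key n)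
    simp only [inner_add_left, real_inner_smul_left] at this
    linarith
  have hpos : 0 ≤ (1 / τ) * ∑ n : ZMod N, ⟪B (e n - e (n - 1)), e n⟫ :=
    mul_nonneg (by positivity) hS
  calc ∑ n : ZMod N, ⟪Khat (w n - u n), w n - u n⟫
      = ∑ n : ZMod N, ⟪Khat (e n), e n⟫ := rfl
    _ ≤ ∑ n : ZMod N, ⟪Khat (v n - u n) - (K (v n) - K (u n)), e n⟫ := by
        rw [hsum]; linarith
    _ = ∑ n : ZMod N, ⟪Khat (v n - u n) - (K (v n) - K (u n)), w n - u n⟫ := rfl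
end
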